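/- arXiv:1011.0010 — 5 statements merged into one kernel-verified Lean document; each statement's English description precedes it below -/
import Mathlib

section
/- Let E be a finite-dimensional real inner product space and g_1, …, g_m ∈ E. A vector v ∈ E minimizes the function w ↦ max_{1≤i≤m} ⟨g_i, w⟩ + (1/2)‖w‖² over E if and only if there exist real numbers α_1, …, α_m ≥ 0 with Σ_{i=1}^m α_i = 1, α_i = 0 for every index i not in I(v) := {i : ⟨g_i, v⟩ = max_{1≤j≤m} ⟨g_j, v⟩}, and v = −Σ_{i=1}^m α_i g_i. -/
/-!
Write `φ(w) = maxᵢ ⟪gᵢ, w⟫ + ‖w‖²/2`. If `u = -∑ αᵢ gᵢ` with weights `α` in the simplex supported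
on the active set of `u`, then `maxᵢ ⟪gᵢ, u⟫ = ∑ αᵢ ⟪gᵢ, u⟫ = -‖u‖²` and
`maxᵢ ⟪gᵢ, w⟫ ≥ ∑ αᵢ ⟪gᵢ, w⟫ = -⟪u, w⟫`, whence `φ(u) + ‖w - u‖²/2 ≤ φ(w)` for every `w`.
So such a `u` is the unique minimizer of `φ`, and it remains to produce one. Take for `z = -u` the
point of least norm in the convex hull of the `gᵢ`: its variational inequality `‖z‖² ≤ ⟪z, gⱼ⟫`,
averaged against the weights of `z`, becomes an equality, so it is tight wherever the weight is
positive, i.e. those `j` are active at `-z`.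
-/

open Finset
open scoped InnerProductSpace

section WeightedAverage

variable {ι : Type*} [Fintype ι] {α f : ι → ℝ}

theorem sum_mul_le_ciSup (hα : α ∈ stdSimplex ℝ ι) (f : ι → ℝ) :
    ∑ i, α i * f i ≤ ⨆ i, f i :=
  calc ∑ i, α i * f i ≤ ∑ i, α i * ⨆ j, f j :=
        sum_le_sum fun i _ =>
          mul_le_mul_of_nonneg_left (le_ciSup (Finite.bddAbove_range f) i) (hα.1 i)
    _ = ⨆ j, f j := by rw [← sum_mul, hα.2, one_mul]

theorem sum_mul_eq_ciSup (hα : α ∈ stdSimplex ℝ ι) (hact : ∀ i, f i ≠ (⨆ j, f j) → α i = 0) :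
    ∑ i, α i * f i = ⨆ i, f i :=
  calc ∑ i, α i * f i = ∑ i, α i * ⨆ j, f j := sum_congr rfl fun i _ => by
        by_cases hi : f i = ⨆ j, f j
        · rw [hi]
        · rw [hact i hi, zero_mul, zero_mul]
    _ = ⨆ j, f j := by rw [← sum_mul, hα.2, one_mul]

theorem eq_zero_of_ne_ciSup_of_sum_mul_eq {c : ℝ} (hα : α ∈ stdSimplex ℝ ι) (hf : ∀ i, f i ≤ c)
    (havg : ∑ i, α i * f i = c) {i : ι} (hi : f i ≠ ⨆ j, f j) : α i = 0 := by
  have hsupp : ∀ j, α j ≠ 0 → f j = c := by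
    have hgap : ∑ j, α j * (c - f j) = 0 := by
      simp only [mul_sub, sum_sub_distrib, ← sum_mul, hα.2, one_mul, havg, sub_self]
    intro j hj
    have hterm := (sum_eq_zero_iff_of_nonneg fun j _ =>
      mul_nonneg (hα.1 j) (sub_nonneg.2 (hf j))).1 hgap j (mem_univ j)
    linarith [(mul_eq_zero.1 hterm).resolve_left hj]
  obtain ⟨j₀, hj₀⟩ : ∃ j, α j ≠ 0 := by
    by_contra! h
    simpa [h] using hα.2
  have : Nonempty ι := ⟨j₀⟩
  have hmax : (⨆ j, f j) = c :=
    le_antisymm (ciSup_le hf) (hsupp j₀ hj₀ ▸ le_ciSup (Finite.bddAbove_range f) j₀)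
  exact not_imp_comm.1 (hsupp i) (hmax ▸ hi)

end WeightedAverage

theorem eq_of_forall_le_of_quadratic_growth {E : Type*} [NormedAddCommGroup E] {φ : E → ℝ}
    {u v : E} (hu : ∀ w, φ u + ‖w - u‖ ^ 2 / 2 ≤ φ w) (hv : ∀ w, φ v ≤ φ w) : v = u := by
  have hsq : ‖v - u‖ ^ 2 ≤ 0 := by linarith [hu v, hv u]
  rw [← sub_eq_zero, ← norm_eq_zero]
  exact pow_eq_zero_iff two_ne_zero |>.1 (le_antisymm hsq (sq_nonneg _))

section InnerProductSpace

variable {E : Type*} [NormedAddCommGroup E] [InnerProductSpace ℝ E]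
variable {ι : Type*} [Fintype ι] {g : ι → E} {α : ι → ℝ}

theorem sum_mul_inner_eq_inner_sum_smul (α : ι → ℝ) (g : ι → E) (x : E) :
    ∑ i, α i * ⟪g i, x⟫_ℝ = ⟪∑ i, α i • g i, x⟫_ℝ := by
  simp only [sum_inner, real_inner_smul_left]

theorem quadratic_growth_of_active_weights {u : E} (hα : α ∈ stdSimplex ℝ ι)
    (hact : ∀ i, ⟪g i, u⟫_ℝ ≠ (⨆ j, ⟪g j, u⟫_ℝ) → α i = 0) (hu : u = -∑ i, α i • g i) (w : E) :
    (⨆ i, ⟪g i, u⟫_ℝ) + ‖u‖ ^ 2 / 2 + ‖w - u‖ ^ 2 / 2 ≤ (⨆ i, ⟪g i, w⟫_ℝ) + ‖w‖ ^ 2 / 2 := by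
  have havg : ∀ x, ∑ i, α i * ⟪g i, x⟫_ℝ = -⟪u, x⟫_ℝ := fun x => by
    rw [sum_mul_inner_eq_inner_sum_smul, hu, inner_neg_left, neg_neg]
  have hmax_u : (⨆ i, ⟪g i, u⟫_ℝ) = -‖u‖ ^ 2 := by
    rw [← sum_mul_eq_ciSup hα hact, havg, real_inner_self_eq_norm_sq]
  have hmax_w : -⟪u, w⟫_ℝ ≤ ⨆ i, ⟪g i, w⟫_ℝ := havg w ▸ sum_mul_le_ciSup hα _
  rw [hmax_u, norm_sub_sq_real, real_inner_comm]
  linarith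

theorem exists_active_weights [Nonempty ι] (g : ι → E) :
    ∃ α ∈ stdSimplex ℝ ι, ∀ i,
      ⟪g i, -∑ j, α j • g j⟫_ℝ ≠ (⨆ k, ⟪g k, -∑ j, α j • g j⟫_ℝ) → α i = 0 := by
  classical
  set L := Fintype.linearCombination ℝ g
  have hK_convex : Convex ℝ (L '' stdSimplex ℝ ι) := (convex_stdSimplex ℝ ι).linear_image L
  have hK_complete : IsComplete (L '' stdSimplex ℝ ι) :=
    ((isCompact_stdSimplex ℝ ι).image L.continuous_of_finiteDimensional).isComplete
  have hK_nonempty : (L '' stdSimplex ℝ ι).Nonempty :=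
    ⟨_, Set.mem_image_of_mem L (single_mem_stdSimplex ℝ (Classical.arbitrary ι))⟩
  obtain ⟨z, hzK, hz_min⟩ :=
    exists_norm_eq_iInf_of_complete_convex hK_nonempty hK_complete hK_convex 0
  have hvar : ∀ j, ‖z‖ ^ 2 ≤ ⟪z, g j⟫_ℝ := fun j => by
    have := (norm_eq_iInf_iff_real_inner_le_zero hK_convex hzK).1 hz_min (g j)
      ⟨Pi.single j 1, single_mem_stdSimplex ℝ j, by simp [L]⟩
    rw [zero_sub, inner_neg_left, inner_sub_right, real_inner_self_eq_norm_sq] at this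
    linarith
  obtain ⟨α, hα, rfl⟩ := hzK
  rw [Fintype.linearCombination_apply] at hvar
  refine ⟨α, hα, fun i hi => eq_zero_of_ne_ciSup_of_sum_mul_eq
    (f := fun k => ⟪g k, -∑ j, α j • g j⟫_ℝ) hα (c := -‖∑ j, α j • g j‖ ^ 2) ?_ ?_ hi⟩
  · intro k
    rw [inner_neg_right, real_inner_comm]
    linarith [hvar k]
  · rw [sum_mul_inner_eq_inner_sum_smul, inner_neg_right, real_inner_self_eq_norm_sq]

end InnerProductSpace

theorem steepest_descent_subproblem_characterization_general
    {E : Type*} [NormedAddCommGroup E] [InnerProductSpace ℝ E]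
    {m : ℕ} (hm : 0 < m) (g : Fin m → E) (v : E) :
    (∀ w : E,
        (⨆ i, (inner ℝ (g i) v : ℝ)) + ‖v‖ ^ 2 / 2 ≤
          (⨆ i, (inner ℝ (g i) w : ℝ)) + ‖w‖ ^ 2 / 2) ↔
      ∃ α : Fin m → ℝ, (∀ i, 0 ≤ α i) ∧ (∑ i, α i) = 1 ∧
        (∀ i, (inner ℝ (g i) v : ℝ) ≠ (⨆ j, (inner ℝ (g j) v : ℝ)) → α i = 0) ∧
        v = -∑ i, α i • g i := by
  have : Nonempty (Fin m) := ⟨⟨0, hm⟩⟩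
  constructor
  · intro hv
    obtain ⟨α, hα, hact⟩ := exists_active_weights g
    obtain rfl := eq_of_forall_le_of_quadratic_growth
      (φ := fun w => (⨆ i, ⟪g i, w⟫_ℝ) + ‖w‖ ^ 2 / 2)
      (quadratic_growth_of_active_weights hα hact rfl) hv
    exact ⟨α, hα.1, hα.2, hact, rfl⟩
  · rintro ⟨α, hα, hsum, hact, hv⟩ w
    linarith [quadratic_growth_of_active_weights ⟨hα, hsum⟩ hact hv w, sq_nonneg ‖w - v‖]

/-- Lemma 3 (second assertion): `v` minimizes
`w ↦ max_{1≤i≤m} ⟨g_i, w⟩ + (1/2)‖w‖²` over `E` if and only if there are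
nonnegative coefficients `α_i` summing to `1`, vanishing outside the active
index set `I(v) = {i : ⟨g_i, v⟩ = max_j ⟨g_j, v⟩}`, with `v = -∑ α_i g_i`. -/
theorem steepest_descent_subproblem_characterization
    {E : Type*} [NormedAddCommGroup E] [InnerProductSpace ℝ E]
    [FiniteDimensional ℝ E] {m : ℕ} (hm : 0 < m) (g : Fin m → E) (v : E) :
    (∀ w : E,
        (⨆ i, (inner ℝ (g i) v : ℝ)) + ‖v‖ ^ 2 / 2 ≤
          (⨆ i, (inner ℝ (g i) w : ℝ)) + ‖w‖ ^ 2 / 2) ↔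
      ∃ α : Fin m → ℝ, (∀ i, 0 ≤ α i) ∧ (∑ i, α i) = 1 ∧
        (∀ i, (inner ℝ (g i) v : ℝ) ≠ (⨆ j, (inner ℝ (g j) v : ℝ)) → α i = 0) ∧
        v = -∑ i, α i • g i :=
  steepest_descent_subproblem_characterization_general hm g v
end

section
/- Let E be a finite-dimensional real inner product space and g_1, …, g_m ∈ E. If there exists v̂ ∈ E with ⟨g_i, v̂⟩ < 0 for all i = 1, …, m, then the unique minimizer v of w ↦ max_{1≤i≤m} ⟨g_i, w⟩ + (1/2)‖w‖² satisfies max_{1≤i≤m} ⟨g_i, v⟩ + (1/2)‖v‖² < 0; in particular ⟨g_i, v⟩ < 0 for all i. -/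
/-! The objective `φ w = max_i ⟪g_i, w⟫ + ‖w‖²/2` is positively homogeneous in its first term,
so along the ray `t • v̂` it equals `t M + t² ‖v̂‖²/2` with `M = max_i ⟪g_i, v̂⟫ < 0`, which is
negative for small `t > 0`. The minimal value is therefore negative, and since `‖v‖²/2 ≥ 0`
every `⟪g_i, v⟫` lies below it. -/

open RealInnerProductSpace

section SteepestDescent

variable {ι E : Type*} [NormedAddCommGroup E] [InnerProductSpace ℝ E]

noncomputable def steepestDescentObjective (g : ι → E) (w : E) : ℝ :=
  (⨆ i, ⟪g i, w⟫) + ‖w‖ ^ 2 / 2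

lemma steepestDescentObjective_smul (g : ι → E) {t : ℝ} (ht : 0 ≤ t) (w : E) :
    steepestDescentObjective g (t • w) = t * (⨆ i, ⟪g i, w⟫) + t ^ 2 * ‖w‖ ^ 2 / 2 := by
  simp only [steepestDescentObjective, real_inner_smul_right, ← Real.mul_iSup_of_nonneg ht,
    norm_smul, Real.norm_of_nonneg ht, mul_pow]

lemma exists_pos_mul_add_sq_mul_neg {M : ℝ} (hM : M < 0) {a : ℝ} (ha : 0 ≤ a) :
    ∃ t : ℝ, 0 < t ∧ t * M + t ^ 2 * a / 2 < 0 := by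
  -- `t = -M / (a + 1)` gives `t a ≤ -M`, hence `t M + t² a / 2 ≤ t M / 2`.
  have hden : 0 < a + 1 := by linarith
  refine ⟨-M / (a + 1), div_pos (neg_pos.mpr hM) hden, ?_⟩
  have hta : -M / (a + 1) * a ≤ -M := by
    rw [div_mul_eq_mul_div, div_le_iff₀ hden]
    nlinarith
  nlinarith [div_pos (neg_pos.mpr hM) hden]

variable [Finite ι]

lemma exists_steepestDescentObjective_neg [Nonempty ι] (g : ι → E) {vhat : E}
    (hvhat : ∀ i, ⟪g i, vhat⟫ < 0) : ∃ w, steepestDescentObjective g w < 0 := by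
  obtain ⟨j, hj⟩ := exists_eq_ciSup_of_finite (f := fun i ↦ ⟪g i, vhat⟫)
  have hM : (⨆ i, ⟪g i, vhat⟫) < 0 := hj ▸ hvhat j
  obtain ⟨t, ht, hneg⟩ := exists_pos_mul_add_sq_mul_neg hM (sq_nonneg ‖vhat‖)
  exact ⟨t • vhat, (steepestDescentObjective_smul g ht.le vhat).trans_lt hneg⟩

lemma inner_lt_zero_of_steepestDescentObjective_neg (g : ι → E) {v : E}
    (hv : steepestDescentObjective g v < 0) (i : ι) : ⟪g i, v⟫ < 0 := by
  have hle : ⟪g i, v⟫ ≤ ⨆ i, ⟪g i, v⟫ :=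
    le_ciSup (Finite.bddAbove_range fun i ↦ ⟪g i, v⟫) i
  have hnorm : 0 ≤ ‖v‖ ^ 2 / 2 := by positivity
  unfold steepestDescentObjective at hv
  linarith

end SteepestDescent

theorem steepest_descent_direction_descent_general
    {E : Type*} [NormedAddCommGroup E] [InnerProductSpace ℝ E]
    {m : ℕ} (hm : 0 < m) (g : Fin m → E)
    (vhat : E) (hvhat : ∀ i, (inner ℝ (g i) vhat : ℝ) < 0) (v : E)
    (hv : ∀ w : E,
      (⨆ i, (inner ℝ (g i) v : ℝ)) + ‖v‖ ^ 2 / 2 ≤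
        (⨆ i, (inner ℝ (g i) w : ℝ)) + ‖w‖ ^ 2 / 2) :
    (⨆ i, (inner ℝ (g i) v : ℝ)) + ‖v‖ ^ 2 / 2 < 0 ∧
      ∀ i, (inner ℝ (g i) v : ℝ) < 0 := by
  have : Nonempty (Fin m) := ⟨⟨0, hm⟩⟩
  obtain ⟨w, hw⟩ := exists_steepestDescentObjective_neg g hvhat
  have hneg : steepestDescentObjective g v < 0 := (hv w).trans_lt hw
  exact ⟨hneg, inner_lt_zero_of_steepestDescentObjective_neg g hneg⟩

/-- Lemma 4: if some `v̂` satisfies `⟨g_i, v̂⟩ < 0` for all `i` (the point is not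
Pareto critical), then the unique minimizer `v` of
`w ↦ max_{1≤i≤m} ⟨g_i, w⟩ + (1/2)‖w‖²` has negative optimal value; in
particular `v` is a descent direction. -/
theorem steepest_descent_direction_descent
    {E : Type*} [NormedAddCommGroup E] [InnerProductSpace ℝ E]
    [FiniteDimensional ℝ E] {m : ℕ} (hm : 0 < m) (g : Fin m → E)
    (vhat : E) (hvhat : ∀ i, (inner ℝ (g i) vhat : ℝ) < 0) (v : E)
    (hv : ∀ w : E,
      (⨆ i, (inner ℝ (g i) v : ℝ)) + ‖v‖ ^ 2 / 2 ≤
        (⨆ i, (inner ℝ (g i) w : ℝ)) + ‖w‖ ^ 2 / 2) :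
    (⨆ i, (inner ℝ (g i) v : ℝ)) + ‖v‖ ^ 2 / 2 < 0 ∧
      ∀ i, (inner ℝ (g i) v : ℝ) < 0 :=
  steepest_descent_direction_descent_general hm g vhat hvhat v hv
end

section
/- Let F = (f_1, …, f_m) : ℝⁿ → ℝᵐ be continuously differentiable. Then the steepest descent direction map ℝⁿ ∋ p ↦ v(p), where v(p) is the unique minimizer over ℝⁿ of v ↦ max_{1≤i≤m} ⟨∇f_i(p), v⟩ + (1/2)‖v‖², is continuous. -/
/-!
Write `φ_g(v) = maxᵢ ⟪gᵢ, v⟫ + ‖v‖²/2`, so that `v(p)` minimizes `φ_{∇F(p)}`. Since `φ_g` is the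
sum of a convex function and `‖v‖²/2`, it grows at least like `‖w - v‖²/4` away from its
minimizer. Moving the gradients from `g` to `h` changes `φ` at `v` by at most `‖g - h‖ ‖v‖`
(with `‖g‖ = maxᵢ ‖gᵢ‖`), and minimizers satisfy `‖v‖ ≤ 2‖g‖`. Comparing the two minimizers in
both objectives gives `‖v_g - v_h‖² ≤ 4 ‖g - h‖ (‖g‖ + ‖h‖)`, so the minimizer depends
Hölder-continuously on the gradients, which depend continuously on `p`.
-/

open Set Filter Topology

theorem ContDiff.continuous_gradient {𝕜 F : Type*} [RCLike 𝕜] [NormedAddCommGroup F]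
    [InnerProductSpace 𝕜 F] [CompleteSpace F] {f : F → 𝕜} (hf : ContDiff 𝕜 1 f) :
    Continuous (gradient f) :=
  (InnerProductSpace.toDual 𝕜 F).symm.continuous.comp (hf.continuous_fderiv one_ne_zero)

section SteepestDescent

variable {ι E : Type*} [Fintype ι] [NormedAddCommGroup E] [InnerProductSpace ℝ E]

noncomputable def descentObjective (g : ι → E) (v : E) : ℝ :=
  (⨆ i, inner ℝ (g i) v) + ‖v‖ ^ 2 / 2

theorem inner_le_iSup_inner (g : ι → E) (v : E) (i : ι) :
    inner ℝ (g i) v ≤ ⨆ j, inner ℝ (g j) v :=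
  le_ciSup (Finite.bddAbove_range fun j => inner ℝ (g j) v) i

theorem iSup_inner_le_iSup_inner_add_norm_mul (g h : ι → E) (v : E) :
    (⨆ i, inner ℝ (g i) v) ≤ (⨆ i, inner ℝ (h i) v) + ‖g - h‖ * ‖v‖ := by
  cases isEmpty_or_nonempty ι
  · simp only [Real.iSup_of_isEmpty, zero_add]
    positivity
  refine ciSup_le fun i => ?_
  calc inner ℝ (g i) v = inner ℝ (h i) v + inner ℝ (g i - h i) v := by
        rw [inner_sub_left]; ring
    _ ≤ (⨆ j, inner ℝ (h j) v) + ‖g - h‖ * ‖v‖ := by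
        gcongr
        · exact inner_le_iSup_inner h v i
        · exact (real_inner_le_norm _ _).trans
            (mul_le_mul_of_nonneg_right (norm_le_pi_norm (g - h) i) (norm_nonneg v))

theorem convexOn_iSup_inner (g : ι → E) : ConvexOn ℝ univ fun v => ⨆ i, inner ℝ (g i) v := by
  refine ⟨convex_univ, fun x _ y _ a b ha hb hab => ?_⟩
  cases isEmpty_or_nonempty ι
  · simp
  refine ciSup_le fun i => ?_
  simp only [smul_eq_mul, inner_add_right, inner_smul_right]
  gcongr <;> exact inner_le_iSup_inner g _ i

theorem ConvexOn.add_sq_norm_sub_le_of_isMinOn {ψ : E → ℝ} (hψ : ConvexOn ℝ univ ψ) {x : E}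
    (hx : IsMinOn (fun v => ψ v + ‖v‖ ^ 2 / 2) univ x) (w : E) :
    ψ x + ‖x‖ ^ 2 / 2 + ‖w - x‖ ^ 2 / 4 ≤ ψ w + ‖w‖ ^ 2 / 2 := by
  -- compare `x` with the midpoint of `x` and `w`; the parallelogram law produces `‖w - x‖²`
  have hmid : ψ ((1 / 2 : ℝ) • x + (1 / 2 : ℝ) • w) ≤ (1 / 2 : ℝ) • ψ x + (1 / 2 : ℝ) • ψ w :=
    hψ.2 (mem_univ x) (mem_univ w) (by norm_num) (by norm_num) (by norm_num)
  have hpar := parallelogram_law_with_norm ℝ x w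
  have hnorm : ‖(1 / 2 : ℝ) • x + (1 / 2 : ℝ) • w‖ ^ 2 = ‖x + w‖ ^ 2 / 4 := by
    rw [← smul_add, norm_smul, mul_pow, Real.norm_of_nonneg (by norm_num)]
    ring
  have hmin := isMinOn_univ_iff.1 hx ((1 / 2 : ℝ) • x + (1 / 2 : ℝ) • w)
  rw [hnorm] at hmin
  rw [smul_eq_mul, smul_eq_mul] at hmid
  rw [norm_sub_rev] at hpar
  linarith

theorem norm_le_two_mul_norm_of_isMinOn_descentObjective {g : ι → E} {x : E}
    (hx : IsMinOn (descentObjective g) univ x) :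
    ‖x‖ ≤ 2 * ‖g‖ := by
  have hle_zero := isMinOn_univ_iff.1 hx 0
  have hlower := iSup_inner_le_iSup_inner_add_norm_mul 0 g x
  simp only [descentObjective, Pi.zero_apply, inner_zero_left, inner_zero_right,
    Real.iSup_const_zero, norm_zero, zero_sub, norm_neg] at hle_zero hlower
  nlinarith [norm_nonneg x, norm_nonneg g]

theorem sq_norm_sub_le_of_isMinOn_descentObjective {g h : ι → E} {x y : E}
    (hx : IsMinOn (descentObjective g) univ x)
    (hy : IsMinOn (descentObjective h) univ y) :
    ‖x - y‖ ^ 2 ≤ 4 * ‖g - h‖ * (‖g‖ + ‖h‖) := by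
  have hgx := (convexOn_iSup_inner g).add_sq_norm_sub_le_of_isMinOn hx y
  have hhy := (convexOn_iSup_inner h).add_sq_norm_sub_le_of_isMinOn hy x
  have hgy := iSup_inner_le_iSup_inner_add_norm_mul g h y
  have hhx := iSup_inner_le_iSup_inner_add_norm_mul h g x
  have hx_le := norm_le_two_mul_norm_of_isMinOn_descentObjective hx
  have hy_le := norm_le_two_mul_norm_of_isMinOn_descentObjective hy
  rw [norm_sub_rev h g] at hhx
  rw [norm_sub_rev y x] at hgx
  nlinarith [norm_nonneg (g - h)]

theorem continuous_of_isMinOn_descentObjective {X : Type*} [TopologicalSpace X] {G : X → ι → E}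
    (hG : Continuous G) {sd : X → E}
    (hsd : ∀ p, IsMinOn (descentObjective (G p)) univ (sd p)) :
    Continuous sd := by
  refine continuous_iff_continuousAt.2 fun p => ?_
  rw [ContinuousAt, tendsto_iff_norm_sub_tendsto_zero]
  have hbound : Tendsto (fun q => √(4 * ‖G q - G p‖ * (‖G q‖ + ‖G p‖))) (𝓝 p) (𝓝 0) := by
    have hc : Continuous fun q => √(4 * ‖G q - G p‖ * (‖G q‖ + ‖G p‖)) := by fun_prop
    simpa using hc.tendsto p
  refine squeeze_zero (fun q => norm_nonneg _) (fun q => ?_) hbound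
  exact Real.le_sqrt_of_sq_le (sq_norm_sub_le_of_isMinOn_descentObjective (hsd q) (hsd p))

end SteepestDescent

theorem steepest_descent_direction_map_continuous_general
    {n m : ℕ} (f : Fin m → EuclideanSpace ℝ (Fin n) → ℝ)
    (hf : ∀ i, ContDiff ℝ 1 (f i))
    (sd : EuclideanSpace ℝ (Fin n) → EuclideanSpace ℝ (Fin n))
    (hsd : ∀ p w,
      (⨆ i, (inner ℝ (gradient (f i) p) (sd p) : ℝ)) + ‖sd p‖ ^ 2 / 2 ≤
        (⨆ i, (inner ℝ (gradient (f i) p) w : ℝ)) + ‖w‖ ^ 2 / 2) :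
    Continuous sd :=
  continuous_of_isMinOn_descentObjective (G := fun p i => gradient (f i) p)
    (continuous_pi fun i => (hf i).continuous_gradient) fun p => isMinOn_univ_iff.2 (hsd p)

/-- Lemma 9 (Euclidean case): for a continuously differentiable
`F = (f_1, …, f_m) : ℝⁿ → ℝᵐ`, the steepest descent direction map
`p ↦ v(p) := argmin_v (max_i ⟨∇f_i(p), v⟩ + (1/2)‖v‖²)` is continuous. -/
theorem steepest_descent_direction_map_continuous
    {n m : ℕ} (hm : 0 < m) (f : Fin m → EuclideanSpace ℝ (Fin n) → ℝ)
    (hf : ∀ i, ContDiff ℝ 1 (f i))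
    (sd : EuclideanSpace ℝ (Fin n) → EuclideanSpace ℝ (Fin n))
    (hsd : ∀ p w,
      (⨆ i, (inner ℝ (gradient (f i) p) (sd p) : ℝ)) + ‖sd p‖ ^ 2 / 2 ≤
        (⨆ i, (inner ℝ (gradient (f i) p) w : ℝ)) + ‖w‖ ^ 2 / 2) :
    Continuous sd :=
  steepest_descent_direction_map_continuous_general f hf sd hsd
end

section
/- Let H = (h_1, …, h_m) : ℝⁿ → ℝᵐ be convex and continuously differentiable. Then a point p ∈ ℝⁿ is Pareto critical for H (i.e., there is no v ∈ ℝⁿ with ⟨∇h_i(p), v⟩ < 0 for all i = 1, …, m) if and only if p is a weak Pareto optimal point of H (i.e., there is no q ∈ ℝⁿ with h_i(q) < h_i(p) for all i = 1, …, m). -/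
/-!
By convexity each `h i` lies above its tangent plane at `p`, so if `q` decreases every `h i`
then `q - p` is a common descent direction. Conversely, along a common descent direction `v`
every `h i` strictly decreases on `p + t • v` for all small `t > 0`.
-/

open Filter Topology Set InnerProductSpace

section

variable {E : Type*} [NormedAddCommGroup E] [NormedSpace ℝ E] {f : E → ℝ} {f' : E →L[ℝ] ℝ}
  {p : E}

theorem HasFDerivAt.hasDerivAt_comp_add_smul (hf : HasFDerivAt f f' p) (v : E) :
    HasDerivAt (fun t : ℝ => f (p + t • v)) (f' v) 0 := by
  have hline : HasDerivAt (fun t : ℝ => p + t • v) v 0 := by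
    simpa using ((hasDerivAt_id (0 : ℝ)).smul_const v).const_add p
  simpa using (zero_smul ℝ v ▸ add_zero p ▸ hf).comp_hasDerivAt (0 : ℝ) hline

theorem HasFDerivAt.eventually_lt_of_apply_neg (hf : HasFDerivAt f f' p) {v : E}
    (hv : f' v < 0) : ∀ᶠ t in 𝓝[>] (0 : ℝ), f (p + t • v) < f p := by
  have hslope := (hf.hasDerivAt_comp_add_smul v).tendsto_slope_zero_right
  filter_upwards [hslope.eventually_lt_const hv, self_mem_nhdsWithin] with t hneg (ht : 0 < t)
  simp only [zero_add, zero_smul, add_zero, smul_eq_mul] at hneg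
  linarith [neg_of_mul_neg_right hneg (inv_nonneg.2 ht.le)]

theorem ConvexOn.hasFDerivAt_apply_sub_le {s : Set E} (hc : ConvexOn ℝ s f) (hp : p ∈ s)
    {q : E} (hq : q ∈ s) (hf : HasFDerivAt f f' p) : f' (q - p) ≤ f q - f p := by
  have hmap : ⇑(AffineMap.lineMap p q : ℝ →ᵃ[ℝ] E) = fun t => p + t • (q - p) :=
    funext fun t => by rw [AffineMap.lineMap_apply_module', add_comm]
  have hline := hc.comp_affineMap (AffineMap.lineMap p q)
  rw [hmap] at hline
  simpa [slope_def_field] using hline.le_slope_of_hasDerivAt (by simpa using hp)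
    (by simpa using hq) one_pos (hf.hasDerivAt_comp_add_smul (q - p))

end

/-- Proposition 16 (Euclidean case): for a convex continuously differentiable
`H = (h_1, …, h_m) : ℝⁿ → ℝᵐ`, a point `p` is Pareto critical (no `v` with
`⟨∇h_i(p), v⟩ < 0` for all `i`) if and only if `p` is weak Pareto optimal
(no `q` with `h_i(q) < h_i(p)` for all `i`). -/
theorem convex_pareto_critical_iff_weak_pareto_optimal
    {n m : ℕ} (h : Fin m → EuclideanSpace ℝ (Fin n) → ℝ)
    (hf : ∀ i, ContDiff ℝ 1 (h i))
    (hconv : ∀ i, ConvexOn ℝ Set.univ (h i))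
    (p : EuclideanSpace ℝ (Fin n)) :
    (¬ ∃ v : EuclideanSpace ℝ (Fin n),
        ∀ i, (inner ℝ (gradient (h i) p) v : ℝ) < 0) ↔
      ¬ ∃ q : EuclideanSpace ℝ (Fin n), ∀ i, h i q < h i p := by
  have hgrad : ∀ i, HasFDerivAt (h i) (toDual ℝ _ (gradient (h i) p)) p := fun i =>
    ((hf i).differentiable one_ne_zero p).hasGradientAt
  constructor
  · rintro hcrit ⟨q, hq⟩
    refine hcrit ⟨q - p, fun i => ?_⟩
    have hsupport := (hconv i).hasFDerivAt_apply_sub_le (mem_univ p) (mem_univ q) (hgrad i)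
    rw [toDual_apply_apply] at hsupport
    linarith [hq i]
  · rintro hopt ⟨v, hv⟩
    have hdescent : ∀ᶠ t in 𝓝[>] (0 : ℝ), ∀ i, h i (p + t • v) < h i p :=
      eventually_all.2 fun i => (hgrad i).eventually_lt_of_apply_neg (by simpa using hv i)
    obtain ⟨t, ht⟩ := hdescent.exists
    exact hopt ⟨p + t • v, ht⟩
end

section
/- Let (X, d) be a metric space, U ⊆ X a nonempty set, and (q^k) a sequence in X that is quasi-Fejér convergent to U. If some accumulation point q̄ of (q^k) belongs to U, then the whole sequence (q^k) converges to q̄. -/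
/-!
Adding the tail sums `∑_{j ≥ k} ε_j` to the squared distances `d(q^k, q̄)²` turns the
quasi-Fejér inequality into monotonicity. A nonincreasing sequence converges to the limit of any
of its subsequences, which along the subsequence accumulating at `q̄` is `0`; since the tail sums
also tend to `0`, so do the squared distances.
-/

open Filter Topology

lemma antitone_add_tsum_nat_add_of_le_add {a ε : ℕ → ℝ} (hε : Summable ε)
    (ha : ∀ k, a (k + 1) ≤ a k + ε k) : Antitone fun k => a k + ∑' j, ε (j + k) := by
  refine antitone_nat_of_succ_le fun k => ?_
  have htail : ∑' j, ε (j + k) = ε k + ∑' j, ε (j + (k + 1)) := by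
    rw [((summable_nat_add_iff k).2 hε).tsum_eq_zero_add]
    simp only [zero_add, add_right_comm _ 1 k, add_assoc]
  linarith [ha k]

lemma tendsto_of_le_add_summable_of_tendsto_comp {a ε : ℕ → ℝ} {σ : ℕ → ℕ} {L : ℝ}
    (hε : Summable ε) (ha : ∀ k, a (k + 1) ≤ a k + ε k) (hσ : Tendsto σ atTop atTop)
    (haσ : Tendsto (a ∘ σ) atTop (𝓝 L)) : Tendsto a atTop (𝓝 L) := by
  have htail : Tendsto (fun k => ∑' j, ε (j + k)) atTop (𝓝 0) := tendsto_sum_nat_add ε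
  have hb : Tendsto (fun k => a k + ∑' j, ε (j + k)) atTop (𝓝 L) := by
    rw [tendsto_iff_tendsto_subseq_of_antitone (antitone_add_tsum_nat_add_of_le_add hε ha) hσ]
    simpa [Function.comp_def] using haσ.add (htail.comp hσ)
  simpa using hb.sub htail

theorem quasiFejer_accumulation_in_U_implies_convergence_general
    {X : Type*} [MetricSpace X] (U : Set X) (q : ℕ → X)
    (hqF : ∀ u ∈ U, ∃ ε : ℕ → ℝ, (∀ k, 0 ≤ ε k) ∧ Summable ε ∧
      ∀ k, dist (q (k + 1)) u ^ 2 ≤ dist (q k) u ^ 2 + ε k)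
    (qbar : X) (hqbarU : qbar ∈ U)
    (hacc : ∃ σ : ℕ → ℕ, StrictMono σ ∧ Tendsto (q ∘ σ) atTop (nhds qbar)) :
    Tendsto q atTop (nhds qbar) := by
  obtain ⟨ε, -, hε, hstep⟩ := hqF qbar hqbarU
  obtain ⟨σ, hσ, hqσ⟩ := hacc
  have hsq : Tendsto (fun k => dist (q k) qbar ^ 2) atTop (𝓝 0) :=
    tendsto_of_le_add_summable_of_tendsto_comp hε hstep hσ.tendsto_atTop
      (by simpa [Function.comp_def] using (tendsto_iff_dist_tendsto_zero.mp hqσ).pow 2)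
  rw [tendsto_iff_dist_tendsto_zero]
  simpa [Real.sqrt_sq dist_nonneg] using hsq.sqrt

/-- Lemma 18 (second assertion): if a sequence is quasi-Fejér convergent to a
nonempty set `U` and some accumulation point `q̄` of the sequence belongs to
`U`, then the whole sequence converges to `q̄`. -/
theorem quasiFejer_accumulation_in_U_implies_convergence
    {X : Type*} [MetricSpace X] (U : Set X) (hU : U.Nonempty) (q : ℕ → X)
    (hqF : ∀ u ∈ U, ∃ ε : ℕ → ℝ, (∀ k, 0 ≤ ε k) ∧ Summable ε ∧
      ∀ k, dist (q (k + 1)) u ^ 2 ≤ dist (q k) u ^ 2 + ε k)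
    (qbar : X) (hqbarU : qbar ∈ U)
    (hacc : ∃ σ : ℕ → ℕ, StrictMono σ ∧ Tendsto (q ∘ σ) atTop (nhds qbar)) :
    Tendsto q atTop (nhds qbar) :=
  quasiFejer_accumulation_in_U_implies_convergence_general U q hqF qbar hqbarU hacc
end
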